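/- Let G = (V, E) be a finite simple 2-edge-connected graph with |V| ≥ 3 and positive edge costs c, and let (G', c') be its inflated instance. If x ∈ P_EC(G), define x' ∈ ℝ^{E'} by x'_{e'} := x_e for the inter-clique edge e' of each e ∈ E, and x'_f := 1 for every clique edge f ∈ F'. Then x' ∈ P_NC(G') and Σ_{e'∈E'} c'_{e'} x'_{e'} = Σ_{e∈E} c_e x_e. -/

import Mathlib

open scoped Classical
open Finset

namespace TwoNCTAP

variable {V : Type*}

/-- The graph `H` with the vertex `u` "deleted": all edges incident to `u` are removed,
so that `u` becomes an isolated vertex. -/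
def delVert (H : SimpleGraph V) (u : V) : SimpleGraph V where
  Adj a b := H.Adj a b ∧ a ≠ u ∧ b ≠ u
  symm := by refine ⟨?_⟩; rintro a b ⟨h, ha, hb⟩; exact ⟨h.symm, hb, ha⟩
  loopless := by refine ⟨?_⟩; rintro a ⟨h, -, -⟩; exact H.irrefl h

/-- The partition of `V ∖ {u}` into the vertex sets of the connected components
of `H − u`. -/
def compPartition (H : SimpleGraph V) (u : V) : Set (Set V) :=
  {S | ∃ v, v ≠ u ∧ S = {w | (delVert H u).Reachable v w}}

/-- `P` is a partition of the set `S`. -/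
def IsPartitionOf (P : Set (Set V)) (S : Set V) : Prop :=
  (∀ B ∈ P, B.Nonempty) ∧ (∀ B ∈ P, B ⊆ S) ∧ ∀ v ∈ S, ∃! B : Set V, B ∈ P ∧ v ∈ B

/-- An edge `e` crosses the partition `P` if its two endpoints lie in different blocks
of `P`. -/
def Crosses (P : Set (Set V)) (e : Sym2 V) : Prop :=
  ∃ v w, e = s(v, w) ∧ ∃ B ∈ P, ∃ C ∈ P, B ≠ C ∧ v ∈ B ∧ w ∈ C

/-- The edge `e` lies in the cut `δ(S)`: it has exactly one endpoint in `S`. -/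
def inCut (S : Set V) (e : Sym2 V) : Prop :=
  ∃ a b, e = s(a, b) ∧ a ∈ S ∧ b ∉ S

/-- `G` is 2-edge-connected: it is connected and remains connected after deleting any
single edge. -/
def TwoEdgeConnected (G : SimpleGraph V) : Prop :=
  G.Connected ∧ ∀ e ∈ G.edgeSet, (G.deleteEdges {e}).Connected

/-- The vertex set of the inflated instance: pairs `(v, e)` with `e ∈ E(G)` and
`v` an endpoint of `e`. -/
abbrev InflVert (G : SimpleGraph V) : Type _ :=
  {p : V × Sym2 V // p.2 ∈ G.edgeSet ∧ p.1 ∈ p.2}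

/-- The inflated graph `G'`: `(v, e)` and `(w, f)` are adjacent iff they are distinct and
either `v = w` (a clique edge) or `e = f` (the inter-clique edge of `e`). -/
def Infl (G : SimpleGraph V) : SimpleGraph (InflVert G) where
  Adj a b := a ≠ b ∧ (a.val.1 = b.val.1 ∨ a.val.2 = b.val.2)
  symm := by
    refine ⟨?_⟩
    rintro a b ⟨h1, h2 | h2⟩
    · exact ⟨h1.symm, Or.inl h2.symm⟩
    · exact ⟨h1.symm, Or.inr h2.symm⟩
  loopless := by refine ⟨?_⟩; rintro a ⟨h, -⟩; exact h rfl

/-- The graph `(V', F')` consisting of the clique edges only. -/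
def cliqueGraph (G : SimpleGraph V) : SimpleGraph (InflVert G) where
  Adj a b := a ≠ b ∧ a.val.1 = b.val.1
  symm := by refine ⟨?_⟩; rintro a b ⟨h1, h2⟩; exact ⟨h1.symm, h2.symm⟩
  loopless := by refine ⟨?_⟩; rintro a ⟨h, -⟩; exact h rfl

variable [Fintype V]

/-- The objective value `Σ_{e ∈ E(H)} c_e x_e` of `x` for costs `c` on the edges of `H`. -/
noncomputable def obj {W : Type*} [Fintype W] (H : SimpleGraph W) (c x : Sym2 W → ℝ) : ℝ :=
  ∑ e ∈ Finset.univ.filter (fun e : Sym2 W => e ∈ H.edgeSet), c e * x e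

/-- The feasible region `P_EC(G)` of the cut LP relaxation of min-cost 2ECSS. -/
def PEC (G : SimpleGraph V) : Set (Sym2 V → ℝ) :=
  {x | (∀ e ∈ G.edgeSet, 0 ≤ x e ∧ x e ≤ 1) ∧
    ∀ S : Set V, S.Nonempty → S ≠ Set.univ →
      (2 : ℝ) ≤ ∑ e ∈ Finset.univ.filter
          (fun e : Sym2 V => e ∈ G.edgeSet ∧ inCut S e), x e}

/-- The feasible region `P_NC(G')` of the partition LP relaxation of min-cost 2NCSS for
the inflated instance: `0 ≤ x ≤ 1`, the cut constraints, and for every `w ∈ V'` and every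
partition `P` of `V' ∖ {w}` whose blocks are unions of vertex sets of connected
components of `(V', F') − w`, the partition constraint. -/
def PNC (G : SimpleGraph V) : Set (Sym2 (InflVert G) → ℝ) :=
  {x | (∀ f ∈ (Infl G).edgeSet, 0 ≤ x f ∧ x f ≤ 1) ∧
    (∀ S : Set (InflVert G), S.Nonempty → S ≠ Set.univ →
      (2 : ℝ) ≤ ∑ f ∈ Finset.univ.filter
          (fun f : Sym2 (InflVert G) => f ∈ (Infl G).edgeSet ∧ inCut S f), x f) ∧
    ∀ (w : InflVert G) (P : Set (Set (InflVert G))),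
      IsPartitionOf P {v | v ≠ w} →
      (∀ B ∈ compPartition (cliqueGraph G) w, ∃ C ∈ P, B ⊆ C) →
      (P.ncard : ℝ) - 1 ≤ ∑ f ∈ Finset.univ.filter
          (fun f : Sym2 (InflVert G) => f ∈ (Infl G).edgeSet ∧ Crosses P f), x f}

end TwoNCTAP

/-!
Write `π : V' → V` for the projection `(v, e) ↦ v`. Inter-clique edges correspond bijectively to
the edges of `G` and carry the same values, while clique edges cost nothing, which gives the
bounds and the objective.

In a cut `δ(S)` of `G'` every crossing clique edge has value `1`, so two of them suffice. If none
crosses, `S = π⁻¹(π S)` and `δ_G(π S)` lifts to inter-clique edges of `δ(S)`. If exactly one,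
`a₀ b₀`, crosses, the same lift works once the edge of `b₀` is charged to `a₀ b₀` (passing to the
complement of `S` when `π S = V`).

For a partition constraint at `w`, the blocks are unions of cliques, hence come from a partition
of `V` into `k` parts. Summing the cut constraints of the parts shows that `x` puts at least `k` on
the crossing edges, and all of these except possibly the edge of `w` lift to edges crossing the
partition.
-/

namespace TwoNCTAP

variable {V : Type*}

section Cuts

variable {W : Type*}

lemma inCut_mk_iff {S : Set W} {a b : W} :
    inCut S s(a, b) ↔ a ∈ S ∧ b ∉ S ∨ b ∈ S ∧ a ∉ S := by
  constructor
  · rintro ⟨p, q, hpq, hp, hq⟩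
    rcases Sym2.eq_iff.mp hpq with ⟨rfl, rfl⟩ | ⟨rfl, rfl⟩
    exacts [Or.inl ⟨hp, hq⟩, Or.inr ⟨hp, hq⟩]
  · rintro (⟨ha, hb⟩ | ⟨hb, ha⟩)
    exacts [⟨a, b, rfl, ha, hb⟩, ⟨b, a, Sym2.eq_swap, hb, ha⟩]

lemma inCut_compl {S : Set W} {f : Sym2 W} : inCut Sᶜ f ↔ inCut S f := by
  induction f with
  | _ a b => simp only [inCut_mk_iff, Set.mem_compl_iff, not_not]; tauto

lemma filter_inCut_fiber {ι : Type*} [Fintype ι] [DecidableEq ι] (β : W → ι) (a b : W) :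
    Finset.univ.filter (fun i => inCut {v | β v = i} s(a, b)) =
      if β a = β b then ∅ else {β a, β b} := by
  ext i
  split_ifs with h
  · simp only [Finset.mem_filter, Finset.mem_univ, true_and, inCut_mk_iff, Set.mem_ofPred_eq,
      h, Finset.notMem_empty, iff_false]
    tauto
  · simp only [Finset.mem_filter, Finset.mem_univ, true_and, inCut_mk_iff, Set.mem_ofPred_eq,
      Finset.mem_insert, Finset.mem_singleton]
    grind

variable [Fintype W]

noncomputable def cutEdges (H : SimpleGraph W) (S : Set W) : Finset (Sym2 W) :=
  Finset.univ.filter (fun f => f ∈ H.edgeSet ∧ inCut S f)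

lemma mem_cutEdges {H : SimpleGraph W} {S : Set W} {f : Sym2 W} :
    f ∈ cutEdges H S ↔ f ∈ H.edgeSet ∧ inCut S f := by
  simp [cutEdges]

lemma cutEdges_compl (H : SimpleGraph W) (S : Set W) : cutEdges H Sᶜ = cutEdges H S := by
  ext f
  simp only [mem_cutEdges, inCut_compl]

/-- Double counting: an edge contributes to the cuts of exactly two fibres of `β` if its ends
lie in different fibres, and to none otherwise. -/
lemma sum_cutEdges_fibers {ι : Type*} [Fintype ι] [DecidableEq ι] (H : SimpleGraph W)
    (β : W → ι) (x : Sym2 W → ℝ) :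
    ∑ i, ∑ f ∈ cutEdges H {v | β v = i}, x f =
      2 * ∑ f ∈ Finset.univ.filter (fun f => f ∈ H.edgeSet ∧ ¬ (f.map β).IsDiag), x f := by
  rw [Finset.sum_comm' (t' := Finset.univ.filter (· ∈ H.edgeSet))
    (s' := fun f => Finset.univ.filter (fun i => inCut {v | β v = i} f))
    (fun i f => by simp [cutEdges, and_comm])]
  rw [Finset.sum_filter, Finset.sum_filter, Finset.mul_sum]
  refine Finset.sum_congr rfl fun f _ => ?_
  induction f with
  | _ a b =>
    simp only [filter_inCut_fiber, Sym2.map_mk, Sym2.mk_isDiag_iff]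
    split_ifs <;> simp_all

end Cuts

section Graph

variable {G : SimpleGraph V}

lemma exists_mem_edgeSet_of_connected [Nontrivial V] (hG : G.Connected) (v : V) :
    ∃ e ∈ G.edgeSet, v ∈ e := by
  obtain ⟨w, hvw⟩ := hG.preconnected.exists_adj_of_nontrivial v
  exact ⟨s(v, w), hvw, Sym2.mem_mk_left v w⟩

lemma TwoEdgeConnected.exists_ne_mem_edgeSet (h2ec : TwoEdgeConnected G) {e : Sym2 V} {v : V}
    (he : e ∈ G.edgeSet) (hv : v ∈ e) : ∃ f ∈ G.edgeSet, v ∈ f ∧ f ≠ e := by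
  obtain ⟨w, rfl⟩ := Sym2.mem_iff_exists.mp hv
  obtain ⟨u, hvu⟩ := ((h2ec.2 _ he).preconnected v w).nonempty_neighborSet_left
    (G.mem_edgeSet.mp he).ne
  rw [SimpleGraph.mem_neighborSet, SimpleGraph.deleteEdges_adj] at hvu
  exact ⟨s(v, u), hvu.1, Sym2.mem_mk_left v u, hvu.2⟩

end Graph

section Inflation

variable {G : SimpleGraph V}

lemma InflVert.ext_iff {a b : InflVert G} : a = b ↔ a.val.1 = b.val.1 ∧ a.val.2 = b.val.2 := by
  rw [Subtype.ext_iff, Prod.ext_iff]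

def interEdge (e : Sym2 V) (he : e ∈ G.edgeSet) : Sym2 (InflVert G) :=
  e.pmap (P := fun v => e ∈ G.edgeSet ∧ v ∈ e) (fun v hv => ⟨(v, e), hv⟩) fun _ hv => ⟨he, hv⟩

lemma interEdge_mk {v w : V} (he : s(v, w) ∈ G.edgeSet) :
    interEdge s(v, w) he =
      s(⟨(v, s(v, w)), he, Sym2.mem_mk_left v w⟩, ⟨(w, s(v, w)), he, Sym2.mem_mk_right v w⟩) :=
  rfl

lemma mem_interEdge {e : Sym2 V} {he : e ∈ G.edgeSet} {a : InflVert G} :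
    a ∈ interEdge e he ↔ a.val.2 = e := by
  simp only [interEdge, Sym2.mem_pmap_iff]
  constructor
  · rintro ⟨v, -, rfl⟩
    rfl
  · intro h
    exact ⟨a.val.1, h ▸ a.prop.2, Subtype.ext (Prod.ext rfl h)⟩

lemma interEdge_injective {e f : Sym2 V} {he : e ∈ G.edgeSet} {hf : f ∈ G.edgeSet}
    (h : interEdge e he = interEdge f hf) : e = f := by
  induction e with
  | _ v w =>
    have hv : (⟨(v, s(v, w)), he, Sym2.mem_mk_left v w⟩ : InflVert G) ∈ interEdge f hf :=
      h ▸ mem_interEdge.mpr rfl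
    exact mem_interEdge.mp hv

lemma interEdge_mem_edgeSet {e : Sym2 V} (he : e ∈ G.edgeSet) :
    interEdge e he ∈ (Infl G).edgeSet := by
  induction e with
  | _ v w =>
    refine ⟨fun h => (G.mem_edgeSet.mp he).ne ?_, Or.inr rfl⟩
    exact congrArg (fun a : InflVert G => a.val.1) h

lemma interEdge_ne_of_fst_eq {e : Sym2 V} (he : e ∈ G.edgeSet) {a b : InflVert G} (hab : a ≠ b)
    (h : a.val.1 = b.val.1) : interEdge e he ≠ s(a, b) := by
  intro heq
  have ha := mem_interEdge.mp (heq ▸ Sym2.mem_mk_left a b)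
  have hb := mem_interEdge.mp (heq ▸ Sym2.mem_mk_right a b)
  exact hab (InflVert.ext_iff.mpr ⟨h, ha.trans hb.symm⟩)

lemma eq_interEdge_of_snd_eq {a b : InflVert G} (hab : a ≠ b) (h : a.val.2 = b.val.2) :
    s(a, b) = interEdge a.val.2 a.prop.1 := by
  have hne : a.val.1 ≠ b.val.1 := fun h1 => hab (InflVert.ext_iff.mpr ⟨h1, h⟩)
  have hpair : a.val.2 = s(a.val.1, b.val.1) :=
    (Sym2.mem_and_mem_iff hne).mp ⟨a.prop.2, h ▸ b.prop.2⟩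
  ext c
  rw [mem_interEdge, Sym2.mem_iff]
  constructor
  · rintro (rfl | rfl)
    exacts [rfl, h.symm]
  · intro hc
    have hc1 : c.val.1 ∈ s(a.val.1, b.val.1) := hpair ▸ hc ▸ c.prop.2
    rcases Sym2.mem_iff.mp hc1 with h1 | h1
    exacts [Or.inl (InflVert.ext_iff.mpr ⟨h1, hc⟩),
      Or.inr (InflVert.ext_iff.mpr ⟨h1, hc.trans h⟩)]

end Inflation

structure IsInflation (G : SimpleGraph V) (k : ℝ) (y : Sym2 V → ℝ)
    (y' : Sym2 (InflVert G) → ℝ) : Prop where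
  clique : ∀ a b : InflVert G, a ≠ b → a.val.1 = b.val.1 → y' s(a, b) = k
  inter : ∀ a b : InflVert G, a ≠ b → a.val.2 = b.val.2 → y' s(a, b) = y a.val.2

namespace IsInflation

variable {G : SimpleGraph V} {k l : ℝ} {y z : Sym2 V → ℝ} {y' z' : Sym2 (InflVert G) → ℝ}

lemma mul (hy : IsInflation G k y y') (hz : IsInflation G l z z') :
    IsInflation G (k * l) (y * z) (y' * z') where
  clique a b hab h := by simp only [Pi.mul_apply, hy.clique a b hab h, hz.clique a b hab h]
  inter a b hab h := by simp only [Pi.mul_apply, hy.inter a b hab h, hz.inter a b hab h]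

lemma apply_interEdge (hy : IsInflation G k y y') {e : Sym2 V} (he : e ∈ G.edgeSet) :
    y' (interEdge e he) = y e := by
  induction e with
  | _ v w => exact hy.inter _ _ (interEdge_mem_edgeSet he).1 rfl

lemma mem_Icc_of_mem_edgeSet (hy : IsInflation G 1 y y')
    (hb : ∀ e ∈ G.edgeSet, 0 ≤ y e ∧ y e ≤ 1) {f : Sym2 (InflVert G)}
    (hf : f ∈ (Infl G).edgeSet) : 0 ≤ y' f ∧ y' f ≤ 1 := by
  induction f with
  | _ a b =>
    obtain ⟨hab, h1 | h2⟩ := hf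
    · rw [hy.clique a b hab h1]
      exact ⟨zero_le_one, le_rfl⟩
    · rw [hy.inter a b hab h2]
      exact hb _ a.prop.1

lemma sum_le_sum_of_interEdge_mem (hy : IsInflation G k y y') {D : Finset (Sym2 V)}
    {F : Finset (Sym2 (InflVert G))} (hF : ∀ f ∈ F, 0 ≤ y' f)
    (hD : ∀ e ∈ D, ∃ he : e ∈ G.edgeSet, interEdge e he ∈ F) :
    ∑ e ∈ D, y e ≤ ∑ f ∈ F, y' f := by
  calc ∑ e ∈ D, y e
      = ∑ f ∈ F.filter (fun f => ∃ e ∈ D, ∃ he, interEdge e he = f), y' f := by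
        refine Finset.sum_bij (fun e he => interEdge e (hD e he).1)
          (fun e he => Finset.mem_filter.mpr ⟨(hD e he).2, e, he, _, rfl⟩)
          (fun _ _ _ _ h => interEdge_injective h) ?_
          (fun e he => (hy.apply_interEdge _).symm)
        intro f hf
        obtain ⟨-, e, he, -, rfl⟩ := Finset.mem_filter.mp hf
        exact ⟨e, he, rfl⟩
    _ ≤ ∑ f ∈ F, y' f :=
        Finset.sum_le_sum_of_subset_of_nonneg (Finset.filter_subset _ _) fun f hf _ => hF f hf

variable [Fintype V]

lemma sum_edgeSet_eq (hy : IsInflation G 0 y y') :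
    ∑ f ∈ Finset.univ.filter (· ∈ (Infl G).edgeSet), y' f =
      ∑ e ∈ Finset.univ.filter (· ∈ G.edgeSet), y e := by
  symm
  refine Finset.sum_bij_ne_zero (fun e he _ => interEdge e (Finset.mem_filter.mp he).2)
    (fun e he _ => Finset.mem_filter.mpr ⟨Finset.mem_univ _, interEdge_mem_edgeSet _⟩)
    (fun _ _ _ _ _ _ h => interEdge_injective h) ?_
    (fun e he _ => (hy.apply_interEdge _).symm)
  intro f hf hne
  induction f with
  | _ a b =>
    obtain ⟨hab, h1 | h2⟩ := (Finset.mem_filter.mp hf).2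
    · exact absurd (hy.clique a b hab h1) hne
    · exact ⟨a.val.2, Finset.mem_filter.mpr ⟨Finset.mem_univ _, a.prop.1⟩,
        by rwa [← hy.inter a b hab h2], (eq_interEdge_of_snd_eq hab h2).symm⟩

end IsInflation

lemma sum_le_sum_erase_add {α M : Type*} [DecidableEq α] [AddCommMonoid M] [PartialOrder M]
    [IsOrderedAddMonoid M] (s : Finset α) (f : α → M) {a : α} (ha : 0 ≤ f a) :
    ∑ b ∈ s, f b ≤ ∑ b ∈ s.erase a, f b + f a := by
  by_cases h : a ∈ s
  · rw [Finset.sum_erase_add _ _ h]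
  · rw [Finset.erase_eq_of_notMem h]
    exact le_add_of_nonneg_right ha

section CutConstraints

variable {G : SimpleGraph V} {x : Sym2 V → ℝ} {x' : Sym2 (InflVert G) → ℝ}

lemma fst_image_ne_univ_or_compl [Nontrivial V] (hG : G.Connected) {S : Set (InflVert G)} {v : V}
    (hunsplit : ∀ a b : InflVert G, a.val.1 = b.val.1 → a.val.1 ≠ v → a ∈ S → b ∈ S) :
    (fun a => a.val.1) '' S ≠ Set.univ ∨ (fun a => a.val.1) '' Sᶜ ≠ Set.univ := by
  obtain ⟨z, hz⟩ := exists_ne v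
  obtain ⟨e, he, hze⟩ := exists_mem_edgeSet_of_connected hG z
  set c : InflVert G := ⟨(z, e), he, hze⟩
  by_cases hc : c ∈ S
  · refine Or.inr fun h => ?_
    obtain ⟨d, hd, hdz⟩ := h.symm ▸ Set.mem_univ z
    exact hd (hunsplit c d hdz.symm hz hc)
  · refine Or.inl fun h => ?_
    obtain ⟨d, hd, hdz⟩ := h.symm ▸ Set.mem_univ z
    exact hc (hunsplit d c hdz (fun h' => hz (hdz.symm.trans h')) hd)

variable [Fintype V]

lemma IsInflation.nonneg_of_mem_PEC (hx' : IsInflation G 1 x x') (hx : x ∈ PEC G)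
    {f : Sym2 (InflVert G)} (hf : f ∈ (Infl G).edgeSet) : 0 ≤ x' f :=
  (hx'.mem_Icc_of_mem_edgeSet hx.1 hf).1

lemma two_le_sum_cutEdges_of_two_clique_edges (hx : x ∈ PEC G) (hx' : IsInflation G 1 x x')
    {S : Set (InflVert G)} {a b c d : InflVert G} (hab : a.val.1 = b.val.1) (ha : a ∈ S)
    (hb : b ∉ S) (hcd : c.val.1 = d.val.1) (hc : c ∈ S) (hd : d ∉ S) (hne : s(a, b) ≠ s(c, d)) :
    2 ≤ ∑ f ∈ cutEdges (Infl G) S, x' f := by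
  have hab' : a ≠ b := fun h => hb (h ▸ ha)
  have hcd' : c ≠ d := fun h => hd (h ▸ hc)
  calc (2 : ℝ) = x' s(a, b) + x' s(c, d) := by
        rw [hx'.clique a b hab' hab, hx'.clique c d hcd' hcd]; norm_num
    _ = ∑ f ∈ {s(a, b), s(c, d)}, x' f := (Finset.sum_pair hne).symm
    _ ≤ ∑ f ∈ cutEdges (Infl G) S, x' f := by
        refine Finset.sum_le_sum_of_subset_of_nonneg ?_ fun f hf _ =>
          hx'.nonneg_of_mem_PEC hx (mem_cutEdges.mp hf).1
        rw [Finset.insert_subset_iff, Finset.singleton_subset_iff]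
        exact ⟨mem_cutEdges.mpr ⟨⟨hab', Or.inl hab⟩, a, b, rfl, ha, hb⟩,
          mem_cutEdges.mpr ⟨⟨hcd', Or.inl hcd⟩, c, d, rfl, hc, hd⟩⟩

lemma interEdge_mem_cutEdges {S : Set (InflVert G)} {e : Sym2 V}
    (he : e ∈ cutEdges G ((fun a => a.val.1) '' S))
    (hS : ∀ a : InflVert G, a.val.2 = e → a.val.1 ∈ (fun a => a.val.1) '' S → a ∈ S) :
    interEdge e (mem_cutEdges.mp he).1 ∈ cutEdges (Infl G) S := by
  obtain ⟨heE, p, q, rfl, hp, hq⟩ := mem_cutEdges.mp he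
  exact mem_cutEdges.mpr ⟨interEdge_mem_edgeSet heE,
    _, _, interEdge_mk heE, hS _ rfl hp, fun hqS => hq ⟨_, hqS, rfl⟩⟩

lemma two_le_sum_cutEdges_of_unsplit (hx : x ∈ PEC G) (hx' : IsInflation G 1 x x')
    {S : Set (InflVert G)} (hne : S.Nonempty) (hS : S ≠ Set.univ)
    (hunsplit : ∀ a b : InflVert G, a.val.1 = b.val.1 → a ∈ S → b ∈ S) :
    2 ≤ ∑ f ∈ cutEdges (Infl G) S, x' f := by
  obtain ⟨a, ha⟩ := hne
  obtain ⟨b, hb⟩ := (Set.ne_univ_iff_exists_notMem S).mp hS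
  have hbT : b.val.1 ∉ (fun a => a.val.1) '' S := by
    rintro ⟨c, hc, hcb⟩
    exact hb (hunsplit c b hcb hc)
  calc 2 ≤ ∑ e ∈ cutEdges G ((fun a => a.val.1) '' S), x e :=
        hx.2 _ ⟨_, a, ha, rfl⟩ ((Set.ne_univ_iff_exists_notMem _).mpr ⟨_, hbT⟩)
    _ ≤ ∑ f ∈ cutEdges (Infl G) S, x' f := by
        refine hx'.sum_le_sum_of_interEdge_mem
          (fun f hf => hx'.nonneg_of_mem_PEC hx (mem_cutEdges.mp hf).1)
          fun e he => ⟨_, interEdge_mem_cutEdges he ?_⟩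
        rintro a - ⟨c, hc, hca⟩
        exact hunsplit c a hca hc

/-- If `a₀ b₀` is the only clique edge leaving `S`, the cut of the projection of `S` in `G`
lifts to the cut of `S`, except for the edge `b₀.2`, which is charged to `a₀ b₀`. -/
lemma two_le_sum_cutEdges_of_unique_split (hx : x ∈ PEC G) (hx' : IsInflation G 1 x x')
    {S : Set (InflVert G)} {a₀ b₀ : InflVert G} (h₀ : a₀.val.1 = b₀.val.1) (ha₀ : a₀ ∈ S)
    (hb₀ : b₀ ∉ S) (hunique : ∀ a b : InflVert G, a.val.1 = b.val.1 → a ∈ S → b ∉ S →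
      a = a₀ ∧ b = b₀)
    (hT : (fun a => a.val.1) '' S ≠ Set.univ) :
    2 ≤ ∑ f ∈ cutEdges (Infl G) S, x' f := by
  have hab₀ : a₀ ≠ b₀ := fun h => hb₀ (h ▸ ha₀)
  have hcut₀ : s(a₀, b₀) ∈ cutEdges (Infl G) S :=
    mem_cutEdges.mpr ⟨⟨hab₀, Or.inl h₀⟩, a₀, b₀, rfl, ha₀, hb₀⟩
  calc 2 ≤ ∑ e ∈ cutEdges G ((fun a => a.val.1) '' S), x e := hx.2 _ ⟨_, a₀, ha₀, rfl⟩ hT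
    _ ≤ ∑ e ∈ (cutEdges G ((fun a => a.val.1) '' S)).erase b₀.val.2, x e + x b₀.val.2 :=
        sum_le_sum_erase_add _ _ (hx.1 _ b₀.prop.1).1
    _ ≤ ∑ f ∈ (cutEdges (Infl G) S).erase s(a₀, b₀), x' f + x' s(a₀, b₀) := by
        refine add_le_add (hx'.sum_le_sum_of_interEdge_mem
          (fun f hf => hx'.nonneg_of_mem_PEC hx (mem_cutEdges.mp (Finset.mem_of_mem_erase hf)).1)
          fun e he => ?_) ?_
        · obtain ⟨hne, he⟩ := Finset.mem_erase.mp he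
          refine ⟨_, Finset.mem_erase.mpr ⟨interEdge_ne_of_fst_eq _ hab₀ h₀,
            interEdge_mem_cutEdges he ?_⟩⟩
          rintro a rfl ⟨c, hc, hca⟩
          by_contra ha
          exact hne (congrArg (fun d : InflVert G => d.val.2) (hunique c a hca hc ha).2)
        · rw [hx'.clique a₀ b₀ hab₀ h₀]
          exact (hx.1 _ b₀.prop.1).2
    _ = ∑ f ∈ cutEdges (Infl G) S, x' f := Finset.sum_erase_add _ _ hcut₀

lemma two_le_sum_cutEdges_of_isInflation [Nontrivial V] (hG : G.Connected) (hx : x ∈ PEC G)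
    (hx' : IsInflation G 1 x x') {S : Set (InflVert G)} (hne : S.Nonempty) (hS : S ≠ Set.univ) :
    2 ≤ ∑ f ∈ cutEdges (Infl G) S, x' f := by
  by_cases hunsplit : ∀ a b : InflVert G, a.val.1 = b.val.1 → a ∈ S → b ∈ S
  · exact two_le_sum_cutEdges_of_unsplit hx hx' hne hS hunsplit
  push Not at hunsplit
  obtain ⟨a₀, b₀, h₀, ha₀, hb₀⟩ := hunsplit
  by_cases hunique : ∀ a b : InflVert G, a.val.1 = b.val.1 → a ∈ S → b ∉ S → a = a₀ ∧ b = b₀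
  · have hunsplit' : ∀ a b : InflVert G, a.val.1 = b.val.1 → a.val.1 ≠ a₀.val.1 →
        a ∈ S → b ∈ S := fun a b hab ha₁ ha => by
      by_contra hb
      exact ha₁ (congrArg (fun d : InflVert G => d.val.1) (hunique a b hab ha hb).1)
    rcases fst_image_ne_univ_or_compl hG hunsplit' with hT | hT
    · exact two_le_sum_cutEdges_of_unique_split hx hx' h₀ ha₀ hb₀ hunique hT
    · rw [← cutEdges_compl]
      refine two_le_sum_cutEdges_of_unique_split hx hx' h₀.symm hb₀ (not_not.mpr ha₀)
        (fun a b hab ha hb => ?_) hT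
      exact (hunique b a hab.symm (not_not.mp hb) ha).symm
  push Not at hunique
  obtain ⟨a, b, h, ha, hb, hne⟩ := hunique
  refine two_le_sum_cutEdges_of_two_clique_edges hx hx' h₀ ha₀ hb₀ h ha hb ?_
  rw [Ne, Sym2.eq_iff]
  rintro (⟨rfl, rfl⟩ | ⟨-, hb₀a⟩)
  exacts [hne rfl rfl, hb₀ (hb₀a ▸ ha)]

end CutConstraints

section PartitionConstraints

lemma IsPartitionOf.mem_of_adj {W : Type*} {H : SimpleGraph W} {w : W} {P : Set (Set W)}
    (hP : IsPartitionOf P {v | v ≠ w}) (hcomp : ∀ B ∈ compPartition H w, ∃ C ∈ P, B ⊆ C)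
    {C : Set W} (hC : C ∈ P) {c d : W} (hc : c ∈ C) (hcd : H.Adj c d) (hd : d ≠ w) : d ∈ C := by
  have hcw : c ≠ w := hP.2.1 C hC hc
  obtain ⟨C', hC', hsub⟩ := hcomp _ ⟨c, hcw, rfl⟩
  have hC'C : C' = C :=
    (hP.2.2 c hcw).unique ⟨hC', hsub (SimpleGraph.Reachable.refl c)⟩ ⟨hC, hc⟩
  exact hC'C ▸ hsub (SimpleGraph.Adj.reachable (G := delVert H w) ⟨hcd, hcw, hd⟩)

variable {G : SimpleGraph V}

lemma TwoEdgeConnected.exists_fst_eq_ne [Nontrivial V] (h2ec : TwoEdgeConnected G) (z : V)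
    (w : InflVert G) : ∃ d : InflVert G, d.val.1 = z ∧ d ≠ w := by
  obtain ⟨e, he, hze⟩ := exists_mem_edgeSet_of_connected h2ec.1 z
  by_cases h : (⟨(z, e), he, hze⟩ : InflVert G) = w
  · obtain ⟨f, hf, hzf, hfe⟩ := h2ec.exists_ne_mem_edgeSet he hze
    refine ⟨⟨(z, f), hf, hzf⟩, rfl, fun h' => hfe ?_⟩
    rw [← h] at h'
    exact congrArg (fun d : InflVert G => d.val.2) h'
  · exact ⟨_, rfl, h⟩

/-- The blocks of an admissible partition `P` of `V' ∖ {w}` are unions of cliques (minus `w`),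
so `P` is the pull-back of a partition of `V`. -/
lemma exists_surjective_block [Nontrivial V] (h2ec : TwoEdgeConnected G) {w : InflVert G}
    {P : Set (Set (InflVert G))} (hP : IsPartitionOf P {v | v ≠ w})
    (hcomp : ∀ B ∈ compPartition (cliqueGraph G) w, ∃ C ∈ P, B ⊆ C) :
    ∃ β : V → P, Function.Surjective β ∧ ∀ a : InflVert G, a ≠ w → a ∈ (β a.val.1 : Set _) := by
  choose d hd₁ hdw using fun z => h2ec.exists_fst_eq_ne z w
  choose β hβ using fun z => (hP.2.2 (d z) (hdw z)).exists
  have hmem : ∀ a : InflVert G, a ≠ w → a ∈ β a.val.1 := by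
    intro a ha
    by_cases had : d a.val.1 = a
    · have h := (hβ a.val.1).2
      rwa [had] at h
    · exact hP.mem_of_adj hcomp (hβ _).1 (hβ _).2 ⟨had, hd₁ _⟩ ha
  refine ⟨fun z => ⟨β z, (hβ z).1⟩, fun C => ?_, hmem⟩
  obtain ⟨a, ha⟩ := hP.1 C C.prop
  have haw : a ≠ w := hP.2.1 C C.prop ha
  exact ⟨a.val.1, Subtype.ext ((hP.2.2 a haw).unique ⟨(hβ _).1, hmem a haw⟩ ⟨C.prop, ha⟩)⟩

variable [Fintype V] {x : Sym2 V → ℝ} {x' : Sym2 (InflVert G) → ℝ}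

lemma card_le_sum_crossing_of_mem_PEC {ι : Type*} [Fintype ι] [DecidableEq ι] (hx : x ∈ PEC G)
    (β : V → ι) (hβ : Function.Surjective β) (hι : 1 < Fintype.card ι) :
    (Fintype.card ι : ℝ) ≤
      ∑ e ∈ Finset.univ.filter (fun e => e ∈ G.edgeSet ∧ ¬ (e.map β).IsDiag), x e := by
  have hfiber : ∀ i, 2 ≤ ∑ e ∈ cutEdges G {v | β v = i}, x e := by
    intro i
    obtain ⟨j, hji⟩ := Fintype.exists_ne_of_one_lt_card hι i
    obtain ⟨u, rfl⟩ := hβ i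
    obtain ⟨v, rfl⟩ := hβ j
    exact hx.2 _ ⟨u, rfl⟩ ((Set.ne_univ_iff_exists_notMem _).mpr ⟨v, hji⟩)
  have hsum := Finset.sum_le_sum fun i (_ : i ∈ Finset.univ) => hfiber i
  rw [sum_cutEdges_fibers, Finset.sum_const, Finset.card_univ, nsmul_eq_mul] at hsum
  linarith

lemma sum_crossing_erase_le_sum_crosses (hx : x ∈ PEC G) (hx' : IsInflation G 1 x x')
    {w : InflVert G} {P : Set (Set (InflVert G))} (β : V → P)
    (hmem : ∀ a : InflVert G, a ≠ w → a ∈ (β a.val.1 : Set _)) :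
    ∑ e ∈ (Finset.univ.filter (fun e => e ∈ G.edgeSet ∧ ¬ (e.map β).IsDiag)).erase w.val.2,
        x e ≤
      ∑ f ∈ Finset.univ.filter
        (fun f : Sym2 (InflVert G) => f ∈ (Infl G).edgeSet ∧ Crosses P f), x' f := by
  refine hx'.sum_le_sum_of_interEdge_mem
    (fun f hf => hx'.nonneg_of_mem_PEC hx (Finset.mem_filter.mp hf).2.1) fun e he => ?_
  obtain ⟨hew, he⟩ := Finset.mem_erase.mp he
  obtain ⟨heE, hcross⟩ := (Finset.mem_filter.mp he).2
  refine ⟨heE, Finset.mem_filter.mpr ⟨Finset.mem_univ _, interEdge_mem_edgeSet heE, ?_⟩⟩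
  induction e with
  | _ p q =>
    rw [Sym2.map_mk, Sym2.mk_isDiag_iff] at hcross
    have hw : ∀ a : InflVert G, a.val.2 = s(p, q) → a ≠ w := fun a ha h =>
      hew (ha.symm.trans (congrArg (fun d : InflVert G => d.val.2) h))
    exact ⟨_, _, interEdge_mk heE, _, (β p).prop, _, (β q).prop, fun h => hcross (Subtype.ext h),
      hmem ⟨(p, s(p, q)), heE, Sym2.mem_mk_left p q⟩ (hw _ rfl),
      hmem ⟨(q, s(p, q)), heE, Sym2.mem_mk_right p q⟩ (hw _ rfl)⟩

lemma ncard_sub_one_le_sum_crosses [Nontrivial V] (h2ec : TwoEdgeConnected G) (hx : x ∈ PEC G)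
    (hx' : IsInflation G 1 x x') (w : InflVert G) (P : Set (Set (InflVert G)))
    (hP : IsPartitionOf P {v | v ≠ w})
    (hcomp : ∀ B ∈ compPartition (cliqueGraph G) w, ∃ C ∈ P, B ⊆ C) :
    (P.ncard : ℝ) - 1 ≤ ∑ f ∈ Finset.univ.filter
      (fun f : Sym2 (InflVert G) => f ∈ (Infl G).edgeSet ∧ Crosses P f), x' f := by
  have hcard : P.ncard = Fintype.card P := by
    rw [← Nat.card_coe_set_eq, Nat.card_eq_fintype_card]
  by_cases hP₁ : P.ncard ≤ 1
  · calc (P.ncard : ℝ) - 1 ≤ 0 := by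
          have : (P.ncard : ℝ) ≤ 1 := by exact_mod_cast hP₁
          linarith
      _ ≤ _ := Finset.sum_nonneg fun f hf =>
          hx'.nonneg_of_mem_PEC hx (Finset.mem_filter.mp hf).2.1
  obtain ⟨β, hβ, hmem⟩ := exists_surjective_block h2ec hP hcomp
  set crossing := Finset.univ.filter (fun e => e ∈ G.edgeSet ∧ ¬ (e.map β).IsDiag)
  calc (P.ncard : ℝ) - 1 ≤ ∑ e ∈ crossing, x e - x w.val.2 := by
        rw [hcard]
        linarith [card_le_sum_crossing_of_mem_PEC hx β hβ (hcard ▸ not_le.mp hP₁),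
          (hx.1 _ w.prop.1).2]
    _ ≤ ∑ e ∈ crossing.erase w.val.2, x e := by
        linarith [sum_le_sum_erase_add crossing x (hx.1 _ w.prop.1).1]
    _ ≤ _ := sum_crossing_erase_le_sum_crosses hx hx' β hmem

end PartitionConstraints

variable [Fintype V]

theorem inflation_EC_to_NC_general
    (G : SimpleGraph V) (hV : 3 ≤ Fintype.card V) (h2ec : TwoEdgeConnected G)
    (c : Sym2 V → ℝ)
    (c' : Sym2 (InflVert G) → ℝ)
    (hc'cl : ∀ a b : InflVert G, a ≠ b → a.val.1 = b.val.1 → c' s(a, b) = 0)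
    (hc'in : ∀ a b : InflVert G, a ≠ b → a.val.2 = b.val.2 → c' s(a, b) = c a.val.2)
    (x : Sym2 V → ℝ) (hx : x ∈ PEC G)
    (x' : Sym2 (InflVert G) → ℝ)
    (hx'cl : ∀ a b : InflVert G, a ≠ b → a.val.1 = b.val.1 → x' s(a, b) = 1)
    (hx'in : ∀ a b : InflVert G, a ≠ b → a.val.2 = b.val.2 → x' s(a, b) = x a.val.2) :
    x' ∈ PNC G ∧ obj (Infl G) c' x' = obj G c x := by
  have : Nontrivial V := Fintype.one_lt_card_iff_nontrivial.mp (by omega)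
  have hx' : IsInflation G 1 x x' := ⟨hx'cl, hx'in⟩
  have hcx' : IsInflation G 0 (c * x) (c' * x') := by
    simpa only [zero_mul] using (IsInflation.mk hc'cl hc'in).mul hx'
  exact ⟨⟨fun f hf => hx'.mem_Icc_of_mem_edgeSet hx.1 hf,
      fun S hne hS => two_le_sum_cutEdges_of_isInflation h2ec.1 hx hx' hne hS,
      ncard_sub_one_le_sum_crosses h2ec hx hx'⟩,
    hcx'.sum_edgeSet_eq⟩

/-- Let `G` be 2-edge-connected with positive edge costs `c`, and let
`(G', c')` be its inflated instance. If `x ∈ P_EC(G)` and `x'` is obtained from `x` by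
putting `x'_{e'} := x_e` on the inter-clique edge `e'` of each `e ∈ E`, and `x'_f := 1`
on every clique edge `f ∈ F'`, then `x' ∈ P_NC(G')` and the two objective values agree. -/
theorem inflation_EC_to_NC
    (G : SimpleGraph V) (hV : 3 ≤ Fintype.card V) (h2ec : TwoEdgeConnected G)
    (c : Sym2 V → ℝ) (hc : ∀ e ∈ G.edgeSet, 0 < c e)
    (c' : Sym2 (InflVert G) → ℝ)
    (hc'cl : ∀ a b : InflVert G, a ≠ b → a.val.1 = b.val.1 → c' s(a, b) = 0)
    (hc'in : ∀ a b : InflVert G, a ≠ b → a.val.2 = b.val.2 → c' s(a, b) = c a.val.2)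
    (x : Sym2 V → ℝ) (hx : x ∈ PEC G)
    (x' : Sym2 (InflVert G) → ℝ)
    (hx'cl : ∀ a b : InflVert G, a ≠ b → a.val.1 = b.val.1 → x' s(a, b) = 1)
    (hx'in : ∀ a b : InflVert G, a ≠ b → a.val.2 = b.val.2 → x' s(a, b) = x a.val.2) :
    x' ∈ PNC G ∧ obj (Infl G) c' x' = obj G c x :=
  inflation_EC_to_NC_general G hV h2ec c c' hc'cl hc'in x hx x' hx'cl hx'in

end TwoNCTAP
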